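/- Let p be an odd prime. The group M(p) has exactly p^2 - 1 conjugacy classes c such that c is disjoint from the Frattini subgroup of M(p) and c is closed under taking (p+1)-th powers, i.e., for every x ∈ c the element x^{p+1} is conjugate to x. -/

import Mathlib

/-!
For an odd prime `p`, the modular group `M(p)` of order `p^3` is the semidirect product
`ZMod (p^2) ⋊ ZMod p`, where the generator of `ZMod p` acts on `ZMod (p^2)` by
multiplication by the unit `1 + p`.
-/

namespace ModularP

/-- The unit `1 + p` of `ZMod (p^2)`. -/
def u (p : ℕ) : (ZMod (p ^ 2))ˣ :=
  ZMod.unitOfCoprime (1 + p) (by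
    simpa [Nat.add_comm] using (Nat.coprime_succ_self p).pow_right 2)

lemma pmul (p : ℕ) : ((p : ZMod (p ^ 2)) * p) = 0 := by
  have h : (((p * p : ℕ)) : ZMod (p ^ 2)) = 0 := by
    rw [← pow_two]; exact ZMod.natCast_self _
  push_cast at h
  exact h

lemma one_add_sq_zero_pow {R : Type*} [CommRing R] (x : R) (hx : x * x = 0) (n : ℕ) :
    (1 + x) ^ n = 1 + (n : R) * x := by
  induction n with
  | zero => simp
  | succ n ih =>
      have key : (1 + (n : R) * x) * (1 + x) = 1 + ((n : R) + 1) * x + (n : R) * (x * x) := by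
        ring
      rw [pow_succ, ih, key, hx, mul_zero, add_zero]
      push_cast
      ring

/-- The unit `1 + p` has multiplicative order dividing `p` in `(ZMod (p^2))ˣ`. -/
lemma u_pow (p : ℕ) : u p ^ p = 1 := by
  ext
  have hc : (u p : ZMod (p ^ 2)) = 1 + p := by simp [u]
  rw [Units.val_pow_eq_pow_val, hc, one_add_sq_zero_pow _ (pmul p), pmul, add_zero,
    Units.val_one]

/-- Units of `ZMod n` acting as multiplicative automorphisms of `Multiplicative (ZMod n)`. -/
def unitsToMulAut (n : ℕ) : (ZMod n)ˣ →* MulAut (Multiplicative (ZMod n)) where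
  toFun c := AddEquiv.toMultiplicative (DistribMulAction.toAddAut (ZMod n)ˣ (ZMod n) c)
  map_one' := by ext x; simp
  map_mul' c d := by ext x; simp [mul_smul]

/-- The action of `ZMod p` on `ZMod (p^2)` in which `k` acts by multiplication
by `(1+p)^k`. -/
def actionHom (p : ℕ) : Multiplicative (ZMod p) →* MulAut (Multiplicative (ZMod (p ^ 2))) :=
  AddMonoidHom.toMultiplicativeLeft
    (ZMod.lift p ⟨zmultiplesHom _ (Additive.ofMul (unitsToMulAut (p ^ 2) (u p))), by
      show (p : ℤ) • Additive.ofMul (unitsToMulAut (p ^ 2) (u p)) = 0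
      rw [← ofMul_zpow, zpow_natCast, ← map_pow, u_pow, map_one]
      rfl⟩)

/-- The modular group `M(p)` of order `p^3`:  the semidirect product
`(ZMod (p^2)) ⋊ (ZMod p)` where the generator of `ZMod p` acts on `ZMod (p^2)` by
multiplication by `1 + p`; equivalently `⟨a, b | a^(p^2) = 1, b^p = 1, b a b⁻¹ = a^(1+p)⟩`. -/
abbrev M (p : ℕ) : Type :=
  SemidirectProduct (Multiplicative (ZMod (p ^ 2))) (Multiplicative (ZMod p)) (actionHom p)

end ModularP

/-!
Reducing both coordinates modulo `p` is a surjection `M(p) → (ℤ/p)²`. Its kernel `{(p k, 0)}`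
consists of central commutators, and a central commutator lies in every maximal subgroup `H`
(otherwise `G = H · Z(G)` would force `[G, G] ≤ H`); conversely the Frattini subgroup lies in the
kernel of every map onto a group of prime order. So the Frattini subgroup is this kernel.
Conjugating `(a, b)` by `(c, d)` adds `p (d a - b c)` to `a`, so away from the kernel each fibre of
the reduction is a single conjugacy class. Hence the classes avoiding the Frattini subgroup
correspond to the `p² - 1` nonzero vectors of `(ℤ/p)²`, and since that group has exponent `p`,
`x` and `x ^ (p + 1)` always lie in the same one.
-/

open Subgroup
open scoped commutatorElement

section General

variable {G A : Type*} [Group G] [CommGroup A]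

lemma one_add_pow_of_mul_self_eq_zero {R : Type*} [CommRing R] {x : R} (hx : x * x = 0) (n : ℕ) :
    (1 + x) ^ n = 1 + n * x := by
  induction n with
  | zero => simp
  | succ n ih => rw [pow_succ, ih]; push_cast; linear_combination (n : R) * hx

lemma exists_mul_sub_mul_eq {K : Type*} [Field K] {x y : K} (h : x ≠ 0 ∨ y ≠ 0) (t : K) :
    ∃ c d : K, d * x - y * c = t := by
  rcases h with hx | hy
  · exact ⟨0, t / x, by field_simp; ring⟩
  · exact ⟨-t / y, 0, by field_simp; ring⟩

lemma commutatorElement_mul_mem_center {a b c d : G} (hc : c ∈ center G) (hd : d ∈ center G) :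
    ⁅a * c, b * d⁆ = ⁅a, b⁆ := by
  have hc' : c * (b * d) = b * d * c := (mem_center_iff.mp hc _).symm
  have hd' : d * a⁻¹ = a⁻¹ * d := (mem_center_iff.mp hd _).symm
  calc ⁅a * c, b * d⁆ = a * (c * (b * d)) * c⁻¹ * a⁻¹ * d⁻¹ * b⁻¹ := by group
    _ = a * b * (d * a⁻¹) * d⁻¹ * b⁻¹ := by rw [hc']; group
    _ = ⁅a, b⁆ := by rw [hd']; group

lemma commutator_le_of_sup_center_eq_top {H : Subgroup G} (h : H ⊔ center G = ⊤) :
    commutator G ≤ H := by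
  have hdecomp (g : G) : ∃ x ∈ H, ∃ c ∈ center G, x * c = g := by
    have : g ∈ ((H ⊔ center G : Subgroup G) : Set G) := by rw [h]; trivial
    rwa [mul_normal] at this
  rw [commutator_def, commutator_le]
  rintro g₁ - g₂ -
  obtain ⟨x₁, hx₁, c₁, hc₁, rfl⟩ := hdecomp g₁
  obtain ⟨x₂, hx₂, c₂, hc₂, rfl⟩ := hdecomp g₂
  rw [commutatorElement_mul_mem_center hc₁ hc₂, commutatorElement_def]
  exact H.mul_mem (H.mul_mem (H.mul_mem hx₁ hx₂) (H.inv_mem hx₁)) (H.inv_mem hx₂)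

theorem commutator_inf_center_le_frattini : commutator G ⊓ center G ≤ frattini G := by
  rintro z ⟨hz, hzc⟩
  simp only [frattini, Order.radical, mem_iInf]
  intro H hH
  by_contra hzH
  have hlt : H < H ⊔ center G :=
    lt_of_le_of_ne le_sup_left fun heq => hzH (heq ▸ mem_sup_right hzc)
  exact hzH (commutator_le_of_sup_center_eq_top (hH.2 _ hlt) hz)

theorem frattini_le_ker_of_card_prime {f : G →* A} (hf : Function.Surjective f)
    (hA : (Nat.card A).Prime) : frattini G ≤ f.ker := by
  have : Fact (Nat.card A).Prime := ⟨hA⟩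
  have := isSimpleGroup_of_prime_card (α := A) rfl
  have hbot : frattini A = ⊥ := le_bot_iff.mp (frattini_le_coatom isCoatom_bot)
  simpa [hbot] using frattini_le_comap_frattini_of_surjective hf

namespace ConjClasses

lemma map_eq_of_mem_carrier (f : G →* A) {c : ConjClasses G} {x y : G} (hx : x ∈ c.carrier)
    (hy : y ∈ c.carrier) : f x = f y := by
  rw [mem_carrier_iff_mk_eq] at hx hy
  exact isConj_iff_eq.mp (f.map_isConj (mk_eq_mk_iff_isConj.mp (hx.trans hy.symm)))

lemma disjoint_ker_iff (f : G →* A) (g : G) :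
    Disjoint (ConjClasses.mk g).carrier (f.ker : Set G) ↔ f g ≠ 1 := by
  have hg : g ∈ (ConjClasses.mk g).carrier := mem_carrier_mk
  refine ⟨fun h => Set.disjoint_left.mp h hg, fun h => Set.disjoint_left.mpr fun x hx => ?_⟩
  rwa [SetLike.mem_coe, MonoidHom.mem_ker, map_eq_of_mem_carrier f hx hg]

theorem card_disjoint_ker [Finite A] {f : G →* A} (hf : Function.Surjective f)
    (hconj : ∀ g g', f g = f g' → f g ≠ 1 → IsConj g g') :
    Nat.card {c : ConjClasses G // Disjoint c.carrier (f.ker : Set G)} = Nat.card A - 1 := by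
  let F : {c : ConjClasses G // Disjoint c.carrier (f.ker : Set G)} → {a : A // a ≠ 1} :=
    fun c => ⟨mkEquiv.symm (map f c.1), by
      obtain ⟨c, hc⟩ := c
      obtain ⟨g, rfl⟩ := mk_surjective c
      exact (disjoint_ker_iff f g).mp hc⟩
  have hF : F.Bijective := by
    refine ⟨?_, fun ⟨a, ha⟩ => ?_⟩
    · rintro ⟨c₁, hc₁⟩ ⟨c₂, -⟩
      obtain ⟨g₁, rfl⟩ := mk_surjective c₁
      obtain ⟨g₂, rfl⟩ := mk_surjective c₂
      intro h
      exact Subtype.ext (mk_eq_mk_iff_isConj.mpr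
        (hconj g₁ g₂ (congrArg Subtype.val h) ((disjoint_ker_iff f g₁).mp hc₁)))
    · obtain ⟨g, rfl⟩ := hf a
      exact ⟨⟨ConjClasses.mk g, (disjoint_ker_iff f g).mpr ha⟩, rfl⟩
  classical
  rw [Nat.card_congr (Equiv.ofBijective F hF), ← Nat.card_congr (Equiv.optionSubtypeNe (1 : A)),
    Finite.card_option, Nat.add_sub_cancel]

lemma pow_mem_carrier_of_disjoint_ker {f : G →* A}
    (hconj : ∀ g g', f g = f g' → f g ≠ 1 → IsConj g g') {n : ℕ}
    (hn : ∀ a : A, a ^ n = a)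
    {c : ConjClasses G} (hc : Disjoint c.carrier (f.ker : Set G)) {x : G} (hx : x ∈ c.carrier) :
    x ^ n ∈ c.carrier := by
  rw [mem_carrier_iff_mk_eq] at hx ⊢
  have hfx : f x ≠ 1 := Set.disjoint_left.mp hc (hx ▸ mem_carrier_mk)
  rw [← hx, mk_eq_mk_iff_isConj]
  exact (hconj x (x ^ n) (by rw [map_pow, hn]) hfx).symm

end ConjClasses

end General

namespace ModularP

lemma natCast_mul_self_eq_zero (p : ℕ) : (p : ZMod (p ^ 2)) * p = 0 := by
  rw [← Nat.cast_mul, ← sq, ZMod.natCast_self]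

def reduceMod (p : ℕ) : ZMod (p ^ 2) →+* ZMod p :=
  ZMod.castHom (dvd_pow_self p two_ne_zero) _

variable {p : ℕ}

def mk (a : ZMod (p ^ 2)) (b : ZMod p) : M p := ⟨.ofAdd a, .ofAdd b⟩

lemma mk_surjective (g : M p) : ∃ a b, mk a b = g := ⟨g.left.toAdd, g.right.toAdd, rfl⟩

section NeZero

variable [NeZero p]

lemma exists_eq_natCast_mul_of_reduceMod_eq_zero {x : ZMod (p ^ 2)} (hx : reduceMod p x = 0) :
    ∃ k : ZMod (p ^ 2), x = (p : ZMod (p ^ 2)) * k := by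
  rw [← ZMod.natCast_zmod_val x, map_natCast, ZMod.natCast_eq_zero_iff] at hx
  obtain ⟨k, hk⟩ := hx
  exact ⟨k, by rw [← ZMod.natCast_zmod_val x, hk, Nat.cast_mul]⟩

lemma natCast_mul_eq_of_reduceMod_eq {x y : ZMod (p ^ 2)} (h : reduceMod p x = reduceMod p y) :
    (p : ZMod (p ^ 2)) * x = p * y := by
  obtain ⟨k, hk⟩ := exists_eq_natCast_mul_of_reduceMod_eq_zero (x := x - y) (by simp [h])
  linear_combination (p : ZMod (p ^ 2)) * hk + k * natCast_mul_self_eq_zero p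

lemma actionHom_apply (b : ZMod p) (x : Multiplicative (ZMod (p ^ 2))) :
    actionHom p (.ofAdd b) x = .ofAdd ((1 + p) ^ b.val * x.toAdd) := by
  have hlift (n : ℤ) : actionHom p (.ofAdd (n : ZMod p)) = unitsToMulAut (p ^ 2) (u p ^ n) := by
    simp [actionHom]
  have hb := hlift b.val
  rw [Int.cast_natCast, ZMod.natCast_zmod_val, zpow_natCast] at hb
  rw [hb]
  show Multiplicative.ofAdd ((u p ^ b.val) • x.toAdd) = _
  simp [Units.smul_def, u]

lemma mk_mul (a₁ a₂ : ZMod (p ^ 2)) (b₁ b₂ : ZMod p) :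
    mk a₁ b₁ * mk a₂ b₂ =
      mk (a₁ + a₂ + (p * b₁.val : ZMod (p ^ 2)) * a₂) (b₁ + b₂) := by
  ext
  · simp only [mk, SemidirectProduct.mul_left, actionHom_apply, toAdd_mul, toAdd_ofAdd,
      one_add_pow_of_mul_self_eq_zero (natCast_mul_self_eq_zero p)]
    ring
  · rfl

lemma mk_conj (a c : ZMod (p ^ 2)) (b d : ZMod p) :
    mk c d * mk a b * (mk c d)⁻¹ =
      mk (a + (p * (d.val * a - b.val * c) : ZMod (p ^ 2))) b := by
  rw [mul_inv_eq_iff_eq_mul, mk_mul, mk_mul, add_comm b]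
  congr 1
  ring

lemma mk_natCast_mul_mem_center (k : ZMod (p ^ 2)) :
    mk ((p : ZMod (p ^ 2)) * k) 0 ∈ center (M p) := by
  refine mem_center_iff.mpr fun g => ?_
  obtain ⟨a, b, rfl⟩ := mk_surjective g
  rw [mk_mul, mk_mul, ZMod.val_zero, add_zero, zero_add]
  congr 1
  linear_combination (b.val : ZMod (p ^ 2)) * k * natCast_mul_self_eq_zero p

lemma mk_natCast_mul_eq_commutatorElement [Fact (1 < p)] (k : ZMod (p ^ 2)) :
    mk ((p : ZMod (p ^ 2)) * k) 0 = ⁅(mk 0 1 : M p), mk k 0⁆ := by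
  rw [commutatorElement_def, mk_conj, eq_mul_inv_iff_mul_eq, mk_mul, ZMod.val_one, ZMod.val_zero]
  congr 1 <;> ring

variable (p) in
def reduceHom : M p →* Multiplicative (ZMod p) × Multiplicative (ZMod p) :=
  SemidirectProduct.lift
    ((MonoidHom.inl _ _).comp (AddMonoidHom.toMultiplicative (reduceMod p).toAddMonoidHom))
    (MonoidHom.inr _ _) fun b => by
      obtain ⟨b, rfl⟩ := Multiplicative.ofAdd.surjective b
      ext x
      · simp [actionHom_apply]
      · simp

@[simp]
lemma reduceHom_mk (a : ZMod (p ^ 2)) (b : ZMod p) :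
    reduceHom p (mk a b) = (.ofAdd (reduceMod p a), .ofAdd b) := by
  simp [reduceHom, SemidirectProduct.lift, mk]

lemma reduceHom_surjective : Function.Surjective (reduceHom p) := fun ⟨x, y⟩ =>
  ⟨mk x.toAdd.val y.toAdd, by simp⟩

lemma reduceHom_mk_eq_one_iff (a : ZMod (p ^ 2)) (b : ZMod p) :
    reduceHom p (mk a b) = 1 ↔ reduceMod p a = 0 ∧ b = 0 := by
  simp [Prod.ext_iff]

lemma ker_reduceHom_le [Fact (1 < p)] :
    (reduceHom p).ker ≤ commutator (M p) ⊓ center (M p) := by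
  intro g hg
  obtain ⟨a, b, rfl⟩ := mk_surjective g
  obtain ⟨ha, rfl⟩ := (reduceHom_mk_eq_one_iff a b).mp hg
  obtain ⟨k, rfl⟩ := exists_eq_natCast_mul_of_reduceMod_eq_zero ha
  refine ⟨?_, mk_natCast_mul_mem_center k⟩
  rw [mk_natCast_mul_eq_commutatorElement]
  exact commutator_mem_commutator (mem_top _) (mem_top _)

lemma pow_succ_eq_self (x : Multiplicative (ZMod p) × Multiplicative (ZMod p)) :
    x ^ (p + 1) = x := by
  have hpow (y : Multiplicative (ZMod p)) : y ^ p = 1 := by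
    simpa using pow_card_eq_one' (x := y)
  ext <;> simp [pow_succ, hpow]

end NeZero

section Prime

variable [hp : Fact p.Prime]

theorem frattini_eq_ker_reduceHom : frattini (M p) = (reduceHom p).ker := by
  refine le_antisymm (fun g hg => ?_) (ker_reduceHom_le.trans commutator_inf_center_le_frattini)
  have hcard : (Nat.card (Multiplicative (ZMod p))).Prime := by simpa using hp.out
  have h₁ := frattini_le_ker_of_card_prime (f := (MonoidHom.fst _ _).comp (reduceHom p))
    (Prod.fst_surjective.comp reduceHom_surjective) hcard hg
  have h₂ := frattini_le_ker_of_card_prime (f := (MonoidHom.snd _ _).comp (reduceHom p))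
    (Prod.snd_surjective.comp reduceHom_surjective) hcard hg
  exact Prod.ext h₁ h₂

theorem isConj_of_reduceHom_eq {g g' : M p} (h : reduceHom p g = reduceHom p g')
    (hne : reduceHom p g ≠ 1) : IsConj g g' := by
  obtain ⟨a, b, rfl⟩ := mk_surjective g
  obtain ⟨a', b', rfl⟩ := mk_surjective g'
  simp only [reduceHom_mk, Prod.mk.injEq, EmbeddingLike.apply_eq_iff_eq] at h
  obtain ⟨ha, rfl⟩ := h
  rw [ne_eq, reduceHom_mk_eq_one_iff, not_and_or] at hne
  obtain ⟨k, hk⟩ := exists_eq_natCast_mul_of_reduceMod_eq_zero (x := a' - a) (by simp [ha])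
  obtain ⟨c, d, hcd⟩ := exists_mul_sub_mul_eq hne (reduceMod p k)
  refine isConj_iff.mpr ⟨mk c.val d, ?_⟩
  rw [mk_conj, natCast_mul_eq_of_reduceMod_eq (y := k) (by simpa using hcd), ← hk,
    add_sub_cancel]

end Prime

end ModularP

open ModularP in
theorem card_conjClasses_modularGroup_general (p : ℕ) (hp : p.Prime) :
    Nat.card {c : ConjClasses (M p) //
      Disjoint c.carrier (frattini (M p) : Set (M p)) ∧
      ∀ x ∈ c.carrier, x ^ (p + 1) ∈ c.carrier} = p ^ 2 - 1 := by
  have := Fact.mk hp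
  have hconj (g g' : M p) :
      reduceHom p g = reduceHom p g' → reduceHom p g ≠ 1 → IsConj g g' :=
    isConj_of_reduceHom_eq
  rw [frattini_eq_ker_reduceHom]
  calc _ = Nat.card {c : ConjClasses (M p) // Disjoint c.carrier ((reduceHom p).ker : Set (M p))} :=
        Nat.card_congr <| Equiv.subtypeEquivRight fun c => and_iff_left_of_imp
          fun hc _ hx => ConjClasses.pow_mem_carrier_of_disjoint_ker hconj pow_succ_eq_self hc hx
    _ = p ^ 2 - 1 := by
        rw [ConjClasses.card_disjoint_ker reduceHom_surjective hconj]
        simp [sq]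

open ModularP in
/-- for an odd prime `p`, the modular group `M(p)` of order `p^3` has exactly
`p^2 - 1` conjugacy classes that are disjoint from the Frattini subgroup and closed under
taking `(p+1)`-th powers. -/
theorem card_conjClasses_modularGroup (p : ℕ) (hp : p.Prime) (hodd : Odd p) :
    Nat.card {c : ConjClasses (M p) //
      Disjoint c.carrier (frattini (M p) : Set (M p)) ∧
      ∀ x ∈ c.carrier, x ^ (p + 1) ∈ c.carrier} = p ^ 2 - 1 :=
  card_conjClasses_modularGroup_general p hp
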